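/- arXiv:1601.04972 — 8 statements merged into one kernel-verified Lean document; each statement's English description precedes it below -/
import Mathlib

section
/- Let $W$ be a $2\times 2$ real matrix (the mean-field connectivity matrix between two groups of a balanced network), let $r_1, r_2 > 0$ be the average firing rates of the two groups, and let $F > 0$ be the common average feedforward input, so that the balance equations $W_{11} r_1 + W_{12} r_2 + F = 0$ and $W_{21} r_1 + W_{22} r_2 + F = 0$ hold. Assume the balanced state is stable in the sense that $\operatorname{tr} W < 0$ and $\det W > 0$. If group 2 has larger average incoming recurrent connection strength, in the sense that $W_{21} + W_{22} < W_{11} + W_{12}$ (its total incoming mean-field weight is more strongly net-inhibitory), then group 2 has the smaller firing rate: $r_2 < r_1$. -/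
/-- In a stable balanced two-group network with equal positive feedforward input,
the group with more strongly net-inhibitory (smaller) total incoming mean-field
weight has the smaller firing rate. -/
theorem highly_connected_group_fires_less
    (W : Matrix (Fin 2) (Fin 2) ℝ) (r₁ r₂ F : ℝ)
    (hr₁ : 0 < r₁) (hr₂ : 0 < r₂) (hF : 0 < F)
    (hbal₁ : W 0 0 * r₁ + W 0 1 * r₂ + F = 0)
    (hbal₂ : W 1 0 * r₁ + W 1 1 * r₂ + F = 0)
    (htr : W.trace < 0) (hdet : 0 < W.det)
    (hin : W 1 0 + W 1 1 < W 0 0 + W 0 1) :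
    r₂ < r₁ := by
  have hd : W.det = W 0 0 * W 1 1 - W 0 1 * W 1 0 := Matrix.det_fin_two W
  have key : W.det * (r₁ - r₂) = F * ((W 0 0 + W 0 1) - (W 1 0 + W 1 1)) := by
    rw [hd]; linear_combination (W 1 1 + W 1 0) * hbal₁ - (W 0 1 + W 0 0) * hbal₂
  nlinarith [mul_pos hF (sub_pos.mpr hin)]
end

section
/- Let $W_h = \begin{pmatrix} w_{ee} & w_{ei} \\ w_{ie} & w_{ii} \end{pmatrix}$ with $w_{ee}, w_{ie} > 0$, $w_{ei}, w_{ii} < 0$, and let $F_e, F_i > 0$. If the balance condition $F_e/F_i > w_{ei}/w_{ii} > w_{ee}/w_{ie}$ holds, then the balance equations $w_{ee} r_e + w_{ei} r_i + F_e = 0$ and $w_{ie} r_e + w_{ii} r_i + F_i = 0$ have a unique solution $(r_e, r_i)$, and this solution satisfies $r_e > 0$ and $r_i > 0$. -/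
/-- Under the balance condition Fe/Fi > wei/wii > wee/wie, the homogeneous balance
equations have a unique solution, and that solution has positive rates. -/
theorem homogeneous_balance_exists_positive
    (wee wei wie wii Fe Fi : ℝ)
    (hwee : 0 < wee) (hwie : 0 < wie) (hwei : wei < 0) (hwii : wii < 0)
    (hFe : 0 < Fe) (hFi : 0 < Fi)
    (hbal₁ : Fe / Fi > wei / wii) (hbal₂ : wei / wii > wee / wie) :
    (∃! p : ℝ × ℝ,
      wee * p.1 + wei * p.2 + Fe = 0 ∧ wie * p.1 + wii * p.2 + Fi = 0) ∧
    ∀ p : ℝ × ℝ,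
      (wee * p.1 + wei * p.2 + Fe = 0 ∧ wie * p.1 + wii * p.2 + Fi = 0) →
      0 < p.1 ∧ 0 < p.2 := by
  have hwii' : (0:ℝ) < -wii := by linarith
  have hneg : wei / wii = (-wei) / (-wii) := by rw [neg_div_neg_eq]
  have hA : wee * (-wii) < (-wei) * wie := by
    rw [← div_lt_div_iff₀ hwie hwii', ← hneg]; exact hbal₂
  have hB : (-wei) * Fi < Fe * (-wii) := by
    rw [← div_lt_div_iff₀ hwii' hFi, ← hneg]; exact hbal₁
  have hC : wee * Fi < Fe * wie := by
    rw [← div_lt_div_iff₀ hwie hFi]; exact lt_trans hbal₂ hbal₁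
  have hD : (0:ℝ) < wee * wii - wei * wie := by nlinarith
  have hD0 : wee * wii - wei * wie ≠ 0 := ne_of_gt hD
  have num1 : (0:ℝ) < wei * Fi - wii * Fe := by nlinarith
  have num2 : (0:ℝ) < wie * Fe - wee * Fi := by nlinarith
  set D := wee * wii - wei * wie with hDdef
  -- general: any solution equals the explicit one
  have key : ∀ p : ℝ × ℝ,
      (wee * p.1 + wei * p.2 + Fe = 0 ∧ wie * p.1 + wii * p.2 + Fi = 0) →
      p.1 = (wei * Fi - wii * Fe) / D ∧ p.2 = (wie * Fe - wee * Fi) / D := by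
    rintro ⟨x, y⟩ ⟨h1, h2⟩
    simp only at h1 h2 ⊢
    constructor
    · rw [eq_div_iff hD0]; linear_combination wii * h1 - wei * h2
    · rw [eq_div_iff hD0]; linear_combination wee * h2 - wie * h1
  constructor
  · refine ⟨((wei * Fi - wii * Fe) / D, (wie * Fe - wee * Fi) / D), ⟨?_, ?_⟩, ?_⟩
    · simp only; field_simp; ring
    · simp only; field_simp; ring
    · intro q hq
      obtain ⟨h1, h2⟩ := key q hq
      exact Prod.ext h1 h2
  · intro p hp
    obtain ⟨h1, h2⟩ := key p hp
    rw [h1, h2]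
    exact ⟨div_pos num1 hD, div_pos num2 hD⟩
end

section
/- Let $W_h$ be any $2\times 2$ real matrix, let $c \neq 0$, and let $F_e, F_i$ be real numbers not both zero. Set $W = \tfrac{1}{2}\begin{pmatrix} (1-c) W_h & (1-c) W_h \\ (1+c) W_h & (1+c) W_h \end{pmatrix}$ and $F = (F_e, F_i, F_e, F_i) \in \mathbb{R}^4$. Then there is no $r \in \mathbb{R}^4$ satisfying the balance equation $W r + F = 0$; that is, $F$ is not in the range of $W$, so heterogeneous in-degrees with homogeneous out-degrees break the balanced state. -/
/-- With heterogeneous in-degrees (c ≠ 0) and homogeneous out-degrees, equal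
nonzero feedforward input to both groups cannot be balanced: W r + F = 0 has
no solution. -/
theorem heterogeneous_in_degrees_break_balance
    (Wh : Matrix (Fin 2) (Fin 2) ℝ) (c Fe Fi : ℝ)
    (hc : c ≠ 0) (hF : ¬(Fe = 0 ∧ Fi = 0)) :
    ¬ ∃ r : Fin 2 ⊕ Fin 2 → ℝ,
      ((1 / 2 : ℝ) • Matrix.fromBlocks
        ((1 - c) • Wh) ((1 - c) • Wh)
        ((1 + c) • Wh) ((1 + c) • Wh)).mulVec r
        + Sum.elim ![Fe, Fi] ![Fe, Fi] = 0 := by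
  rintro ⟨r, hr⟩
  have h1 := congrFun hr (Sum.inl 0)
  have h2 := congrFun hr (Sum.inr 0)
  have h3 := congrFun hr (Sum.inl 1)
  have h4 := congrFun hr (Sum.inr 1)
  simp [Matrix.mulVec, Matrix.fromBlocks, dotProduct, Fintype.sum_sum_type,
    Fin.sum_univ_two, Matrix.smul_apply, smul_eq_mul] at h1 h2 h3 h4
  apply hF
  set A := Wh 0 0 * (r (Sum.inl 0) + r (Sum.inr 0)) + Wh 0 1 * (r (Sum.inl 1) + r (Sum.inr 1)) with hA
  set B := Wh 1 0 * (r (Sum.inl 0) + r (Sum.inr 0)) + Wh 1 1 * (r (Sum.inl 1) + r (Sum.inr 1)) with hB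
  have hcA : c * A = 0 := by linear_combination h2 - h1
  have hcB : c * B = 0 := by linear_combination h4 - h3
  have hA0 : A = 0 := by rcases mul_eq_zero.1 hcA with h | h; exact absurd h hc; exact h
  have hB0 : B = 0 := by rcases mul_eq_zero.1 hcB with h | h; exact absurd h hc; exact h
  rw [hA] at hA0
  rw [hB] at hB0
  constructor
  · linear_combination h1 - 2⁻¹ * (1 - c) * hA0
  · linear_combination h3 - 2⁻¹ * (1 - c) * hB0
end

section
/- Let $W_h$ be a $2\times 2$ real invertible matrix, $f = (F_e, F_i) \in \mathbb{R}^2$, $0 < c_{in} < 1$ and $0 < c_{out}$. Set $W = \tfrac{1}{2}\begin{pmatrix} (1-c_{in}) W_h & (1-c_{in}) W_h \\ (1+c_{in})(1-c_{out}) W_h & (1+c_{in})(1+c_{out}) W_h \end{pmatrix}$ and $F = (F_e, F_i, F_e, F_i)$. Then the unique solution $r = (r^{(1)}, r^{(2)}) \in \mathbb{R}^2 \times \mathbb{R}^2$ of the balance equation $W r + F = 0$ is given by $r^{(1)} = \alpha \, \rho$ and $r^{(2)} = \beta \, \rho$, where $\rho = -W_h^{-1} f$, $\alpha = \dfrac{2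 c_{in} + c_{out}(1+c_{in})}{(1-c_{in}^2)\, c_{out}}$ and $\beta = \dfrac{c_{out}(1+c_{in}) - 2 c_{in}}{(1-c_{in}^2)\, c_{out}}$. -/
/-- Explicit unique solution of the balance equation for the correlated
heterogeneous-degree network: r⁽¹⁾ = α ρ, r⁽²⁾ = β ρ where ρ = -Wh⁻¹ f. -/
theorem correlated_degree_balance_solution
    (Wh : Matrix (Fin 2) (Fin 2) ℝ) (hWh : IsUnit Wh.det)
    (Fe Fi cin cout : ℝ)
    (hcin0 : 0 < cin) (hcin1 : cin < 1) (hcout : 0 < cout)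
    (W : Matrix (Fin 2 ⊕ Fin 2) (Fin 2 ⊕ Fin 2) ℝ)
    (hW : W = (1 / 2 : ℝ) • Matrix.fromBlocks
      ((1 - cin) • Wh) ((1 - cin) • Wh)
      (((1 + cin) * (1 - cout)) • Wh) (((1 + cin) * (1 + cout)) • Wh))
    (ρ : Fin 2 → ℝ) (hρ : ρ = -(Wh⁻¹.mulVec ![Fe, Fi]))
    (α β : ℝ)
    (hα : α = (2 * cin + cout * (1 + cin)) / ((1 - cin ^ 2) * cout))
    (hβ : β = (cout * (1 + cin) - 2 * cin) / ((1 - cin ^ 2) * cout)) :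
    ∀ r : Fin 2 ⊕ Fin 2 → ℝ,
      W.mulVec r + Sum.elim ![Fe, Fi] ![Fe, Fi] = 0 ↔
      ∀ i, r (Sum.inl i) = α * ρ i ∧ r (Sum.inr i) = β * ρ i := by
  have hn1 : (1 - cin) ≠ 0 := by linarith
  have hn2 : (1 + cin) ≠ 0 := by linarith
  have hnc : cout ≠ 0 := ne_of_gt hcout
  have hn12 : (1 - cin ^ 2) ≠ 0 := by nlinarith
  -- key fact: Wh.mulVec ρ = -f
  have hWρ : ∀ i, Wh i 0 * ρ 0 + Wh i 1 * ρ 1 = -(![Fe, Fi] i) := by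
    have h0 : Wh.mulVec ρ = -![Fe, Fi] := by
      rw [hρ, Matrix.mulVec_neg, Matrix.mulVec_mulVec, Matrix.mul_nonsing_inv _ hWh,
        Matrix.one_mulVec]
    intro i
    have := congrFun h0 i
    simpa [Matrix.mulVec, dotProduct, Fin.sum_univ_two] using this
  intro r
  constructor
  · intro h
    intro i
    -- vector equations
    have hx : (fun j => (1 - cin) * (r (Sum.inl j) + r (Sum.inr j))) = (2 : ℝ) • ρ := by
      have h0 : Wh.mulVec (fun j => (1 - cin) * (r (Sum.inl j) + r (Sum.inr j)))
          = (-2 : ℝ) • ![Fe, Fi] := by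
        funext k
        have h1 := congrFun h (Sum.inl k)
        simp [hW, Matrix.mulVec, dotProduct, Fintype.sum_sum_type, Matrix.fromBlocks,
          Fin.sum_univ_two, mul_add, add_mul] at h1 ⊢
        linear_combination 2 * h1
      calc (fun j => (1 - cin) * (r (Sum.inl j) + r (Sum.inr j)))
          = (Wh⁻¹ * Wh).mulVec (fun j => (1 - cin) * (r (Sum.inl j) + r (Sum.inr j))) := by
            rw [Matrix.nonsing_inv_mul _ hWh, Matrix.one_mulVec]
        _ = Wh⁻¹.mulVec (Wh.mulVec (fun j => (1 - cin) * (r (Sum.inl j) + r (Sum.inr j)))) := by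
            rw [Matrix.mulVec_mulVec]
        _ = Wh⁻¹.mulVec ((-2 : ℝ) • ![Fe, Fi]) := by rw [h0]
        _ = (2 : ℝ) • ρ := by
            rw [Matrix.mulVec_smul, hρ]
            module
    have hy : (fun j => (1 + cin) * ((1 - cout) * r (Sum.inl j) + (1 + cout) * r (Sum.inr j)))
        = (2 : ℝ) • ρ := by
      have h0 : Wh.mulVec (fun j => (1 + cin) * ((1 - cout) * r (Sum.inl j)
            + (1 + cout) * r (Sum.inr j))) = (-2 : ℝ) • ![Fe, Fi] := by
        funext k
        have h2 := congrFun h (Sum.inr k)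
        simp [hW, Matrix.mulVec, dotProduct, Fintype.sum_sum_type, Matrix.fromBlocks,
          Fin.sum_univ_two, mul_add, add_mul] at h2 ⊢
        linear_combination 2 * h2
      calc (fun j => (1 + cin) * ((1 - cout) * r (Sum.inl j) + (1 + cout) * r (Sum.inr j)))
          = (Wh⁻¹ * Wh).mulVec (fun j => (1 + cin) * ((1 - cout) * r (Sum.inl j)
              + (1 + cout) * r (Sum.inr j))) := by
            rw [Matrix.nonsing_inv_mul _ hWh, Matrix.one_mulVec]
        _ = Wh⁻¹.mulVec (Wh.mulVec (fun j => (1 + cin) * ((1 - cout) * r (Sum.inl j)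
              + (1 + cout) * r (Sum.inr j)))) := by
            rw [Matrix.mulVec_mulVec]
        _ = Wh⁻¹.mulVec ((-2 : ℝ) • ![Fe, Fi]) := by rw [h0]
        _ = (2 : ℝ) • ρ := by
            rw [Matrix.mulVec_smul, hρ]
            module
    have hxi : (1 - cin) * (r (Sum.inl i) + r (Sum.inr i)) = 2 * ρ i := by
      have := congrFun hx i
      simpa using this
    have hyi : (1 + cin) * ((1 - cout) * r (Sum.inl i) + (1 + cout) * r (Sum.inr i))
        = 2 * ρ i := by
      have := congrFun hy i
      simpa using this
    constructor
    · rw [hα]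
      field_simp
      linear_combination ((1 + cin) * (1 + cout) / 2) * hxi - ((1 - cin) / 2) * hyi
    · rw [hβ]
      field_simp
      linear_combination (-(1 + cin) * (1 - cout) / 2) * hxi + ((1 - cin) / 2) * hyi
  · intro hr
    have hαβ : (1 - cin) * (α + β) = 2 := by
      rw [hα, hβ]; field_simp; ring
    have hαβ2 : (1 + cin) * ((1 - cout) * α + (1 + cout) * β) = 2 := by
      rw [hα, hβ]; field_simp; ring
    funext x
    cases x with
    | inl i =>
      have hl := (hr 0).1; have hl1 := (hr 1).1
      have hrr := (hr 0).2; have hrr1 := (hr 1).2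
      simp [hW, Matrix.mulVec, dotProduct, Fintype.sum_sum_type, Matrix.fromBlocks,
        Fin.sum_univ_two, mul_add, add_mul, hl, hl1, hrr, hrr1]
      linear_combination ((1 - cin) * (α + β) / 2) * hWρ i - (![Fe, Fi] i / 2) * hαβ
    | inr i =>
      have hl := (hr 0).1; have hl1 := (hr 1).1
      have hrr := (hr 0).2; have hrr1 := (hr 1).2
      simp [hW, Matrix.mulVec, dotProduct, Fintype.sum_sum_type, Matrix.fromBlocks,
        Fin.sum_univ_two, mul_add, add_mul, hl, hl1, hrr, hrr1]
      linear_combination ((1 + cin) * ((1 - cout) * α + (1 + cout) * β) / 2) * hWρ i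
        - (![Fe, Fi] i / 2) * hαβ2
end

section
/- Let $W_h = \begin{pmatrix} w_{ee} & w_{ei} \\ w_{ie} & w_{ii} \end{pmatrix}$ with $w_{ee}, w_{ie} > 0$, $w_{ei}, w_{ii} < 0$, $F_e, F_i > 0$, and suppose the balance condition $F_e/F_i > w_{ei}/w_{ii} > w_{ee}/w_{ie}$ holds. Let $0 < c_{in} < 1$ and $0 < c_{out} \le 1$ satisfy $c_{out} > c_{in}(2 - c_{out})$. Then the balance equation $W r + F = 0$, with $W = \tfrac{1}{2}\begin{pmatrix} (1-c_{in}) W_h & (1-c_{in}) W_h \\ (1+c_{in})(1-c_{out}) W_h & (1+c_{in})(1+c_{out}) W_h \end{pmatrix}$ and $F = (F_e, F_i, F_e, F_i)$, has a unique solution $r \in \mathbb{R}^4$, and all four components of $r$ are positive; i.e., heterogeneous out-degrees correlated with in-degrees restore the balanced state. -/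
/-!
Writing `r = (x, y)` with `x, y ∈ ℝ²`, the rewired matrix is `K ⊗ W_h` with
`K = ½ [[1 - cin, 1 - cin], [(1 + cin)(1 - cout), (1 + cin)(1 + cout)]]`. As `W_h` is invertible,
the balance equation says `K (x, y) = (r_h, r_h)` componentwise, where `r_h = -W_h⁻¹ F` is the
homogeneous balanced state, positive by the balance condition. So `x = s r_h` and `y = t r_h` where
`K (s, t) = (1, 1)`; here `s > 0` always, and `t > 0` is exactly `cout > cin (2 - cout)`.
-/

open Matrix

theorem linear_system_two_iff {K : Type*} [Field K] {a b c d : K} (hdet : a * d - b * c ≠ 0)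
    (x y z : K) :
    a * x + b * y = z ∧ c * x + d * y = z ↔
      x = (d - b) / (a * d - b * c) * z ∧ y = (a - c) / (a * d - b * c) * z := by
  simp only [div_mul_eq_mul_div, eq_div_iff hdet]
  constructor
  · rintro ⟨h₁, h₂⟩
    constructor
    · linear_combination d * h₁ - b * h₂
    · linear_combination a * h₂ - c * h₁
  · rintro ⟨h₁, h₂⟩
    constructor
    · apply mul_right_cancel₀ hdet
      linear_combination a * h₁ + b * h₂
    · apply mul_right_cancel₀ hdet
      linear_combination c * h₁ + d * h₂

theorem fromBlocks_smul_mulVec_add_eq_zero_iff {K n : Type*} [Field K] [Fintype n]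
    {M : Matrix n n K} (hM : Function.Injective M.mulVec) {F r₀ : n → K} (hr₀ : M *ᵥ r₀ + F = 0)
    {a b c d : K} (hdet : a * d - b * c ≠ 0) (r : n ⊕ n → K) :
    fromBlocks (a • M) (b • M) (c • M) (d • M) *ᵥ r + Sum.elim F F = 0 ↔
      r = Sum.elim (((d - b) / (a * d - b * c)) • r₀) (((a - c) / (a * d - b * c)) • r₀) := by
  have hsolve : ∀ u, M *ᵥ u + F = 0 ↔ u = r₀ := fun u => by
    rw [← hr₀, add_left_inj]
    exact hM.eq_iff
  conv_rhs => rw [← Sum.elim_comp_inl_inr r]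
  rw [fromBlocks_mulVec, ← Sum.elim_add_add, ← Sum.elim_zero_zero, Sum.elim_eq_iff,
    Sum.elim_eq_iff]
  simp only [smul_mulVec, ← mulVec_smul, ← mulVec_add, hsolve, funext_iff, ← forall_and,
    Pi.add_apply, Pi.smul_apply, Function.comp_apply, smul_eq_mul, linear_system_two_iff hdet]

theorem det_pos_of_balance {wee wei wie wii : ℝ} (hwie : 0 < wie) (hwii : wii < 0)
    (hbal : wei / wii > wee / wie) : 0 < wee * wii - wei * wie := by
  rw [gt_iff_lt, ← neg_div_neg_eq wei, div_lt_div_iff₀ hwie (neg_pos.2 hwii)] at hbal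
  linarith

theorem exists_pos_balanced_rates {wee wei wie wii Fe Fi : ℝ} (hwie : 0 < wie) (hwii : wii < 0)
    (hFi : 0 < Fi) (hbal₁ : Fe / Fi > wei / wii) (hbal₂ : wei / wii > wee / wie) :
    ∃ r : Fin 2 → ℝ, (∀ i, 0 < r i) ∧ !![wee, wei; wie, wii] *ᵥ r + ![Fe, Fi] = 0 := by
  have hdet := det_pos_of_balance hwie hwii hbal₂
  have hbal₃ := hbal₂.trans hbal₁
  rw [gt_iff_lt, ← neg_div_neg_eq wei, div_lt_div_iff₀ (neg_pos.2 hwii) hFi] at hbal₁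
  rw [div_lt_div_iff₀ hwie hFi] at hbal₃
  refine ⟨![(wei * Fi - wii * Fe) / (wee * wii - wei * wie),
    (wie * Fe - wee * Fi) / (wee * wii - wei * wie)], fun i => ?_, ?_⟩
  · fin_cases i <;> exact div_pos (by linarith) hdet
  · ext i
    fin_cases i <;>
      simp only [mulVec_fin_two, of_apply, cons_val', cons_val_zero, cons_val_one, empty_val',
        cons_val_fin_one, Pi.add_apply, Pi.zero_apply, Fin.zero_eta, Fin.mk_one] <;>
      rw [mul_div_assoc', mul_div_assoc', ← add_div, div_add' _ _ _ hdet.ne', div_eq_zero_iff] <;>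
      left <;> ring

theorem heterogeneous_out_degrees_restore_balance_general
    (wee wei wie wii Fe Fi : ℝ)
    (hwie : 0 < wie) (hwii : wii < 0)
    (hFi : 0 < Fi)
    (hbal₁ : Fe / Fi > wei / wii) (hbal₂ : wei / wii > wee / wie)
    (cin cout : ℝ) (hcin0 : 0 < cin) (hcin1 : cin < 1)
    (hc : cout > cin * (2 - cout))
    (Wh : Matrix (Fin 2) (Fin 2) ℝ) (hWh : Wh = !![wee, wei; wie, wii])
    (W : Matrix (Fin 2 ⊕ Fin 2) (Fin 2 ⊕ Fin 2) ℝ)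
    (hW : W = (1 / 2 : ℝ) • Matrix.fromBlocks
      ((1 - cin) • Wh) ((1 - cin) • Wh)
      (((1 + cin) * (1 - cout)) • Wh) (((1 + cin) * (1 + cout)) • Wh)) :
    (∃! r : Fin 2 ⊕ Fin 2 → ℝ,
      W.mulVec r + Sum.elim ![Fe, Fi] ![Fe, Fi] = 0) ∧
    ∀ r : Fin 2 ⊕ Fin 2 → ℝ,
      W.mulVec r + Sum.elim ![Fe, Fi] ![Fe, Fi] = 0 → ∀ i, 0 < r i := by
  subst hWh hW
  obtain ⟨rh, hrh_pos, hrh⟩ := exists_pos_balanced_rates hwie hwii hFi hbal₁ hbal₂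
  have hM : Function.Injective (!![wee, wei; wie, wii]).mulVec := by
    rw [mulVec_injective_iff_isUnit, isUnit_iff_isUnit_det, det_fin_two_of]
    exact (det_pos_of_balance hwie hwii hbal₂).ne'.isUnit
  simp only [fromBlocks_smul, smul_smul]
  set a := (1 / 2 : ℝ) * (1 - cin) with ha_def
  set c := (1 / 2 : ℝ) * ((1 + cin) * (1 - cout)) with hc_def
  set d := (1 / 2 : ℝ) * ((1 + cin) * (1 + cout)) with hd_def
  have hdet : 0 < a * d - a * c := by rw [ha_def, hc_def, hd_def]; nlinarith
  have hs : 0 < (d - a) / (a * d - a * c) := div_pos (by rw [ha_def, hd_def]; nlinarith) hdet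
  have ht : 0 < (a - c) / (a * d - a * c) := div_pos (by rw [ha_def, hc_def]; nlinarith) hdet
  have key := fromBlocks_smul_mulVec_add_eq_zero_iff hM hrh hdet.ne'
  refine ⟨⟨_, (key _).2 rfl, fun r hr => (key r).1 hr⟩, fun r hr i => ?_⟩
  rw [(key r).1 hr]
  rcases i with i | i
  exacts [mul_pos hs (hrh_pos i), mul_pos ht (hrh_pos i)]

/-- When the homogeneous balance condition holds and cout > cin (2 - cout),
the balance equation of the correlated heterogeneous-degree network has a
unique solution and all four rates are positive. -/
theorem heterogeneous_out_degrees_restore_balance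
    (wee wei wie wii Fe Fi : ℝ)
    (hwee : 0 < wee) (hwie : 0 < wie) (hwei : wei < 0) (hwii : wii < 0)
    (hFe : 0 < Fe) (hFi : 0 < Fi)
    (hbal₁ : Fe / Fi > wei / wii) (hbal₂ : wei / wii > wee / wie)
    (cin cout : ℝ) (hcin0 : 0 < cin) (hcin1 : cin < 1)
    (hcout0 : 0 < cout) (hcout1 : cout ≤ 1)
    (hc : cout > cin * (2 - cout))
    (Wh : Matrix (Fin 2) (Fin 2) ℝ) (hWh : Wh = !![wee, wei; wie, wii])
    (W : Matrix (Fin 2 ⊕ Fin 2) (Fin 2 ⊕ Fin 2) ℝ)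
    (hW : W = (1 / 2 : ℝ) • Matrix.fromBlocks
      ((1 - cin) • Wh) ((1 - cin) • Wh)
      (((1 + cin) * (1 - cout)) • Wh) (((1 + cin) * (1 + cout)) • Wh)) :
    (∃! r : Fin 2 ⊕ Fin 2 → ℝ,
      W.mulVec r + Sum.elim ![Fe, Fi] ![Fe, Fi] = 0) ∧
    ∀ r : Fin 2 ⊕ Fin 2 → ℝ,
      W.mulVec r + Sum.elim ![Fe, Fi] ![Fe, Fi] = 0 → ∀ i, 0 < r i :=
  heterogeneous_out_degrees_restore_balance_general wee wei wie wii Fe Fi hwie hwii hFi hbal₁ hbal₂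
    cin cout hcin0 hcin1 hc Wh hWh W hW
end

section
/- Let $W_h = \begin{pmatrix} w_{ee} & w_{ei} \\ w_{ie} & w_{ii} \end{pmatrix}$ with $w_{ee}, w_{ie} > 0$, $w_{ei}, w_{ii} < 0$, $F_e, F_i > 0$, satisfying the balance condition $F_e/F_i > w_{ei}/w_{ii} > w_{ee}/w_{ie}$, and let $0 < c_{in} < 1$, $0 < c_{out} \le 1$ with $c_{out} > c_{in}(2 - c_{out})$. Let $r = (r_{e_1}, r_{i_1}, r_{e_2}, r_{i_2})$ be the unique solution of $W r + F = 0$ with $W = \tfrac{1}{2}\begin{pmatrix} (1-c_{in}) W_h & (1-c_{in}) W_h \\ (1+c_{in})(1-c_{out}) W_h & (1+c_{in})(1+c_{out}) W_h \end{pmatrix}$ and $F = (F_e, F_i, F_e, F_i)$. Then $r_{e_2} < r_{e_1}$ and $r_{i_2} < r_{i_1}$: the populations with higher in-degree fire at strictly lower rates. -/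
set_option maxHeartbeats 1000000

/-- In the balanced correlated heterogeneous-degree network, the populations
with higher in-degree (e₂, i₂) fire at strictly lower rates than (e₁, i₁). -/
theorem higher_in_degree_lower_rate
    (wee wei wie wii Fe Fi : ℝ)
    (hwee : 0 < wee) (hwie : 0 < wie) (hwei : wei < 0) (hwii : wii < 0)
    (hFe : 0 < Fe) (hFi : 0 < Fi)
    (hbal₁ : Fe / Fi > wei / wii) (hbal₂ : wei / wii > wee / wie)
    (cin cout : ℝ) (hcin0 : 0 < cin) (hcin1 : cin < 1)
    (hcout0 : 0 < cout) (hcout1 : cout ≤ 1)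
    (hc : cout > cin * (2 - cout))
    (Wh : Matrix (Fin 2) (Fin 2) ℝ) (hWh : Wh = !![wee, wei; wie, wii])
    (W : Matrix (Fin 2 ⊕ Fin 2) (Fin 2 ⊕ Fin 2) ℝ)
    (hW : W = (1 / 2 : ℝ) • Matrix.fromBlocks
      ((1 - cin) • Wh) ((1 - cin) • Wh)
      (((1 + cin) * (1 - cout)) • Wh) (((1 + cin) * (1 + cout)) • Wh))
    (r : Fin 2 ⊕ Fin 2 → ℝ)
    (hr : W.mulVec r + Sum.elim ![Fe, Fi] ![Fe, Fi] = 0) :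
    r (Sum.inr 0) < r (Sum.inl 0) ∧ r (Sum.inr 1) < r (Sum.inl 1) := by
  subst hWh hW
  set a := r (Sum.inl 0) with ha
  set b := r (Sum.inl 1) with hb
  set c := r (Sum.inr 0) with hcc
  set d := r (Sum.inr 1) with hd
  have E1 := congrFun hr (Sum.inl 0)
  have E2 := congrFun hr (Sum.inl 1)
  have E3 := congrFun hr (Sum.inr 0)
  have E4 := congrFun hr (Sum.inr 1)
  simp [Matrix.mulVec, Matrix.fromBlocks, dotProduct, Fin.sum_univ_two,
    Matrix.smul_apply, Matrix.of_apply, ← ha, ← hb, ← hcc, ← hd] at E1 E2 E3 E4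
  clear hr
  -- sign facts from the balance conditions
  have hwii' : (0:ℝ) < -wii := by linarith
  have hb2 : wee / wie < (-wei) / (-wii) := by rwa [neg_div_neg_eq]
  have hdet : wei * wie < wee * wii := by
    have := (div_lt_div_iff₀ hwie hwii').1 hb2
    linarith
  have hb1 : (-wei) / (-wii) < Fe / Fi := by rwa [neg_div_neg_eq]
  have h1 : wii * Fe < wei * Fi := by
    have := (div_lt_div_iff₀ hwii' hFi).1 hb1
    linarith
  have hb3 : wee / wie < Fe / Fi := lt_trans hb2 hb1
  have h3 : wee * Fi < wie * Fe := by
    have := (div_lt_div_iff₀ hwie hFi).1 hb3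
    linarith
  -- key identities
  have P : (1 - cin) * (1 + cin) * cout * (wee * (c - a) + wei * (d - b))
      = 4 * cin * Fe := by
    linear_combination (2 * (1 - cin)) * E3 - (2 * (1 + cin)) * E1
  have Q : (1 - cin) * (1 + cin) * cout * (wie * (c - a) + wii * (d - b))
      = 4 * cin * Fi := by
    linear_combination (2 * (1 - cin)) * E4 - (2 * (1 + cin)) * E2
  have hca : (wee * wii - wei * wie) * ((1 - cin) * (1 + cin) * cout) * (c - a)
      = 4 * cin * (wii * Fe - wei * Fi) := by
    linear_combination wii * P - wei * Q
  have hdb : (wee * wii - wei * wie) * ((1 - cin) * (1 + cin) * cout) * (d - b)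
      = 4 * cin * (wee * Fi - wie * Fe) := by
    linear_combination wee * Q - wie * P
  have hpos : 0 < (wee * wii - wei * wie) * ((1 - cin) * (1 + cin) * cout) := by
    apply mul_pos (by linarith)
    apply mul_pos (mul_pos (by linarith) (by linarith)) hcout0
  have hca' : (wee * wii - wei * wie) * ((1 - cin) * (1 + cin) * cout) * (c - a) < 0 := by
    calc _ = 4 * cin * (wii * Fe - wei * Fi) := hca
      _ < 0 := by nlinarith [mul_pos hcin0 (show (0:ℝ) < wei * Fi - wii * Fe by linarith)]
  have hdb' : (wee * wii - wei * wie) * ((1 - cin) * (1 + cin) * cout) * (d - b) < 0 := by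
    calc _ = 4 * cin * (wee * Fi - wie * Fe) := hdb
      _ < 0 := by nlinarith [mul_pos hcin0 (show (0:ℝ) < wie * Fe - wee * Fi by linarith)]
  constructor
  · by_contra h
    push_neg at h
    nlinarith [mul_nonneg hpos.le (sub_nonneg.2 h)]
  · by_contra h
    push_neg at h
    nlinarith [mul_nonneg hpos.le (sub_nonneg.2 h)]
end

section
/- Let $W_h = \begin{pmatrix} w_{ee} & w_{ei} \\ w_{ie} & w_{ii} \end{pmatrix}$ with $w_{ee}, w_{ie} > 0$, $w_{ei}, w_{ii} < 0$, $F_e, F_i > 0$, satisfying the balance condition $F_e/F_i > w_{ei}/w_{ii} > w_{ee}/w_{ie}$, and let $0 < c_{in} < 1$, $0 < c_{out} \le 1$. If $c_{out} \le c_{in}(2 - c_{out})$, then the unique solution $r = (r_{e_1}, r_{i_1}, r_{e_2}, r_{i_2})$ of $W r + F = 0$, with $W = \tfrac{1}{2}\begin{pmatrix} (1-c_{in}) W_h & (1-c_{in}) W_h \\ (1+c_{in})(1-c_{out}) W_h & (1+c_{in})(1+c_{out}) W_h \end{pmatrix}$ and $F = (F_e, F_i, F_e, F_i)$, satisfies $r_{e_2}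 \le 0$ and $r_{i_2} \le 0$; hence no balanced state with all rates positive exists, so the condition $c_{out} > c_{in}(2-c_{out})$ is necessary for balance. -/
set_option maxHeartbeats 1600000 in
/-- If cout ≤ cin (2 - cout), the solution of the balance equation has
non-positive rates in the highly connected populations e₂, i₂, so no balanced
state with all rates positive exists. -/
theorem insufficient_out_degree_correlation_quenches_rates
    (wee wei wie wii Fe Fi : ℝ)
    (hwee : 0 < wee) (hwie : 0 < wie) (hwei : wei < 0) (hwii : wii < 0)
    (hFe : 0 < Fe) (hFi : 0 < Fi)
    (hbal₁ : Fe / Fi > wei / wii) (hbal₂ : wei / wii > wee / wie)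
    (cin cout : ℝ) (hcin0 : 0 < cin) (hcin1 : cin < 1)
    (hcout0 : 0 < cout) (hcout1 : cout ≤ 1)
    (hc : cout ≤ cin * (2 - cout))
    (Wh : Matrix (Fin 2) (Fin 2) ℝ) (hWh : Wh = !![wee, wei; wie, wii])
    (W : Matrix (Fin 2 ⊕ Fin 2) (Fin 2 ⊕ Fin 2) ℝ)
    (hW : W = (1 / 2 : ℝ) • Matrix.fromBlocks
      ((1 - cin) • Wh) ((1 - cin) • Wh)
      (((1 + cin) * (1 - cout)) • Wh) (((1 + cin) * (1 + cout)) • Wh))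
    (r : Fin 2 ⊕ Fin 2 → ℝ)
    (hr : W.mulVec r + Sum.elim ![Fe, Fi] ![Fe, Fi] = 0) :
    r (Sum.inr 0) ≤ 0 ∧ r (Sum.inr 1) ≤ 0 := by
  subst hW hWh
  have e1 := congrFun hr (Sum.inl 0)
  have e2 := congrFun hr (Sum.inl 1)
  have e3 := congrFun hr (Sum.inr 0)
  have e4 := congrFun hr (Sum.inr 1)
  simp [Matrix.mulVec, dotProduct, Fintype.sum_sum_type, Fin.sum_univ_two,
    Matrix.fromBlocks] at e1 e2 e3 e4
  clear hr
  obtain ⟨x1, hx1⟩ : ∃ a, r (Sum.inl 0) = a := ⟨_, rfl⟩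
  obtain ⟨y1, hy1⟩ : ∃ a, r (Sum.inl 1) = a := ⟨_, rfl⟩
  obtain ⟨x2, hx2⟩ : ∃ a, r (Sum.inr 0) = a := ⟨_, rfl⟩
  obtain ⟨y2, hy2⟩ : ∃ a, r (Sum.inr 1) = a := ⟨_, rfl⟩
  rw [hx1, hy1, hx2, hy2] at e1 e2 e3 e4
  rw [hx2, hy2]
  -- determinant positive
  have hwii' : (0:ℝ) < -wii := by linarith
  have hbal₂' : wee * (-wii) < -wei * wie := by
    have h := hbal₂
    rw [gt_iff_lt, show wei / wii = -wei / -wii by rw [neg_div_neg_eq],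
      div_lt_div_iff₀ hwie hwii'] at h
    linarith
  have hD : 0 < wee * wii - wei * wie := by nlinarith
  have hbal₁' : wei * Fi - wii * Fe > 0 := by
    have h := hbal₁
    rw [gt_iff_lt, show wei / wii = -wei / -wii by rw [neg_div_neg_eq],
      div_lt_div_iff₀ hwii' hFi] at h
    linarith
  have hbal₃' : wie * Fe - wee * Fi > 0 := by
    have h := lt_trans hbal₂ hbal₁
    rw [div_lt_div_iff₀ hwie hFi] at h
    linarith
  -- differences U, V vanish
  have hU : (wee * wii - wei * wie) *
      ((1 - cin) * (x1 + x2) - (1 + cin) * ((1 - cout) * x1 + (1 + cout) * x2)) = 0 := by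
    linear_combination (2 * wii) * e1 - (2 * wii) * e3 - (2 * wei) * e2 + (2 * wei) * e4
  have hV : (wee * wii - wei * wie) *
      ((1 - cin) * (y1 + y2) - (1 + cin) * ((1 - cout) * y1 + (1 + cout) * y2)) = 0 := by
    linear_combination (2 * wee) * e2 - (2 * wee) * e4 - (2 * wie) * e1 + (2 * wie) * e3
  have hU0 : (1 - cin) * (x1 + x2) - (1 + cin) * ((1 - cout) * x1 + (1 + cout) * x2) = 0 :=
    (mul_eq_zero.1 hU).resolve_left hD.ne'
  have hV0 : (1 - cin) * (y1 + y2) - (1 + cin) * ((1 - cout) * y1 + (1 + cout) * y2) = 0 :=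
    (mul_eq_zero.1 hV).resolve_left hD.ne'
  -- sums s, t positive
  have hs : (wee * wii - wei * wie) * ((1 - cin) * (x1 + x2)) = 2 * (wei * Fi - wii * Fe) := by
    linear_combination (2 * wii) * e1 - (2 * wei) * e2
  have ht : (wee * wii - wei * wie) * ((1 - cin) * (y1 + y2)) = 2 * (wie * Fe - wee * Fi) := by
    linear_combination (2 * wee) * e2 - (2 * wie) * e1
  have hcin1' : (0:ℝ) < 1 - cin := by linarith
  have hspos : 0 < x1 + x2 := by
    have h2 : 0 < (wee * wii - wei * wie) * ((1 - cin) * (x1 + x2)) := by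
      rw [hs]; linarith
    by_contra hle
    push_neg at hle
    have : (wee * wii - wei * wie) * ((1 - cin) * (x1 + x2)) ≤ 0 :=
      mul_nonpos_of_nonneg_of_nonpos hD.le (mul_nonpos_of_nonneg_of_nonpos hcin1'.le hle)
    linarith
  have htpos : 0 < y1 + y2 := by
    have h2 : 0 < (wee * wii - wei * wie) * ((1 - cin) * (y1 + y2)) := by
      rw [ht]; linarith
    by_contra hle
    push_neg at hle
    have : (wee * wii - wei * wie) * ((1 - cin) * (y1 + y2)) ≤ 0 :=
      mul_nonpos_of_nonneg_of_nonpos hD.le (mul_nonpos_of_nonneg_of_nonpos hcin1'.le hle)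
    linarith
  -- a ≤ 0, a+b > 0, (a+b) x2 = a s
  have ha : cout - cin * (2 - cout) ≤ 0 := by linarith
  have habx : (2 * cout * (1 + cin)) * x2 = (cout - cin * (2 - cout)) * (x1 + x2) := by
    linear_combination (-1 : ℝ) * hU0
  have haby : (2 * cout * (1 + cin)) * y2 = (cout - cin * (2 - cout)) * (y1 + y2) := by
    linear_combination (-1 : ℝ) * hV0
  have hab : 0 < 2 * cout * (1 + cin) := by nlinarith
  constructor
  · have h5 : (2 * cout * (1 + cin)) * x2 ≤ (2 * cout * (1 + cin)) * 0 := by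
      rw [mul_zero, habx]; exact mul_nonpos_of_nonpos_of_nonneg ha hspos.le
    exact le_of_mul_le_mul_left h5 hab
  · have h5 : (2 * cout * (1 + cin)) * y2 ≤ (2 * cout * (1 + cin)) * 0 := by
      rw [mul_zero, haby]; exact mul_nonpos_of_nonpos_of_nonneg ha htpos.le
    exact le_of_mul_le_mul_left h5 hab
end

section
/- Let $N > 0$, $\mu \in \mathbb{R}$, $j_{ee}, j_{ei}, j_{ie}, j_{ii} \in \mathbb{R}$, and $F_e, F_i \in \mathbb{R}$ with $F_e > 0$. Then there do not exist real numbers $\bar r_e, \bar r_i$ such that for every $u \in (\mu, \infty)$ both $\tfrac{u}{N}\,(j_{ee} \bar r_e - j_{ei} \bar r_i) + F_e = 0$ and $\tfrac{u}{N}\,(j_{ie} \bar r_e - j_{ii} \bar r_i) + F_i = 0$ hold. In other words, in a network where connection probability onto a neuron is proportional to its in-degree ($p(u,v) = u/N$) and out-degrees are homogeneous, the balance equations cannot be satisfied simultaneously for all in-degrees $u > \mu$, so the classical balanced state is violated. -/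
/-- In a scale-free network with connection probability p(u,v) = u/N and
homogeneous out-degrees, the balance equations cannot hold simultaneously
for all in-degrees u > μ. -/
theorem scale_free_network_breaks_balance
    (N μ jee jei jie jii Fe Fi : ℝ) (hN : 0 < N) (hFe : 0 < Fe) :
    ¬ ∃ re ri : ℝ, ∀ u ∈ Set.Ioi μ,
      u / N * (jee * re - jei * ri) + Fe = 0 ∧
      u / N * (jie * re - jii * ri) + Fi = 0 := by
  rintro ⟨re, ri, h⟩
  have h1 := (h (μ + 1) (by simp)).1
  have h2 := (h (μ + 2) (by simp [lt_add_of_pos_right])).1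
  set A := jee * re - jei * ri with hA
  have key : A / N = 0 := by
    have e : (μ + 2) / N * A - (μ + 1) / N * A = A / N := by ring
    linarith
  have hA0 : A = 0 := by
    rcases div_eq_zero_iff.mp key with h' | h'
    · exact h'
    · exact absurd h' (ne_of_gt hN)
  rw [hA0, mul_zero, zero_add] at h1
  linarith
end
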